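/- arXiv:2512.02878 — 4 statements merged into one kernel-verified Lean document; each statement's English description precedes it below -/
import Mathlib

section
/- Under the stated setting, the weak law of large numbers with plugged-in estimator holds: (1/n) ∑_{i=1}^n G(θ̂_n, X_i) converges in probability to E[G(θ₀, X_1)] as n → ∞. -/
/-!
Write `Aₙ(θ) = n⁻¹ ∑_{i<n} G(θ, Xᵢ)`. By the strong law of large numbers, applied to the
i.i.d. bounded variables `G(θ₀, Xᵢ)`, `Aₙ(θ₀) → E[G(θ₀, X₁)]` almost surely, hence in probability.
Since `G` is continuous on a neighbourhood of `{θ₀} × [0, tmax]` and `[0, tmax]` is compact,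
`G(θ, ·) → G(θ₀, ·)` uniformly on `[0, tmax]` as `θ → θ₀`; so `|Aₙ(θ̂ₙ) - Aₙ(θ₀)| ≤ ε` as soon as
`θ̂ₙ` is within some `δ` of `θ₀`, an event whose probability tends to one.
-/

open MeasureTheory ProbabilityTheory Filter Topology Set

theorem ContinuousOn.tendstoUniformlyOn_of_isCompact {α β γ : Type*} [UniformSpace α]
    [LocallyCompactSpace α] [UniformSpace β] [UniformSpace γ] {f : α → β → γ} {x : α}
    {U : Set α} (hU : U ∈ 𝓝 x) {K : Set β} (hK : IsCompact K) (h : ContinuousOn ↿f (U ×ˢ K)) :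
    TendstoUniformlyOn f (f x) (𝓝 x) K := by
  obtain ⟨L, hxL, hLU, hL⟩ := LocallyCompactSpace.local_compact_nhds _ _ hU
  have hf : UniformContinuousOn ↿f (L ×ˢ K) :=
    (hL.prod hK).uniformContinuousOn_of_continuous (h.mono (prod_mono hLU Subset.rfl))
  simpa only [nhdsWithin_eq_nhds.2 hxL] using hf.tendstoUniformlyOn (mem_of_mem_nhds hxL)

theorem dist_inv_card_mul_sum_le {ι : Type*} {s : Finset ι} {f g : ι → ℝ} {ε : ℝ} (hε : 0 ≤ ε)
    (h : ∀ i ∈ s, dist (f i) (g i) ≤ ε) :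
    dist ((s.card : ℝ)⁻¹ * ∑ i ∈ s, f i) ((s.card : ℝ)⁻¹ * ∑ i ∈ s, g i) ≤ ε := by
  rcases s.eq_empty_or_nonempty with rfl | hs
  · simpa using hε
  have hcard : (0 : ℝ) < s.card := by exact_mod_cast hs.card_pos
  calc dist ((s.card : ℝ)⁻¹ * ∑ i ∈ s, f i) ((s.card : ℝ)⁻¹ * ∑ i ∈ s, g i)
      = (s.card : ℝ)⁻¹ * dist (∑ i ∈ s, f i) (∑ i ∈ s, g i) := by
        rw [← smul_eq_mul, ← smul_eq_mul, dist_smul₀, Real.norm_of_nonneg (by positivity)]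
    _ ≤ (s.card : ℝ)⁻¹ * ∑ _i ∈ s, ε := by gcongr; exact dist_sum_sum_le_of_le _ h
    _ = ε := by rw [Finset.sum_const, nsmul_eq_mul]; field_simp

theorem TendstoInMeasure.of_dist_le {Ω ι E F : Type*} [MeasurableSpace Ω] {μ : Measure Ω}
    [PseudoMetricSpace E] [PseudoMetricSpace F] {l : Filter ι} {f g : ι → Ω → F} {b : Ω → F}
    {θ : ι → Ω → E} {θ₀ : Ω → E} (hg : TendstoInMeasure μ g l b)
    (hθ : TendstoInMeasure μ θ l θ₀)
    (hfg : ∀ ε > 0, ∃ δ > 0, ∀ n ω, dist (θ n ω) (θ₀ ω) < δ → dist (f n ω) (g n ω) ≤ ε) :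
    TendstoInMeasure μ f l b := by
  rw [tendstoInMeasure_iff_dist] at hg hθ ⊢
  intro ε hε
  obtain ⟨δ, hδ, hclose⟩ := hfg (ε / 2) (half_pos hε)
  have hsub : ∀ n, {ω | ε ≤ dist (f n ω) (b ω)} ⊆
      {ω | δ ≤ dist (θ n ω) (θ₀ ω)} ∪ {ω | ε / 2 ≤ dist (g n ω) (b ω)} := by
    intro n ω (hω : ε ≤ dist (f n ω) (b ω))
    rcases lt_or_ge (dist (θ n ω) (θ₀ ω)) δ with hn | hn
    · right
      show ε / 2 ≤ dist (g n ω) (b ω)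
      linarith [hclose n ω hn, dist_triangle (f n ω) (g n ω) (b ω)]
    · exact Or.inl hn
  refine tendsto_of_tendsto_of_tendsto_of_le_of_le tendsto_const_nhds
    (by simpa using (hθ δ hδ).add (hg (ε / 2) (half_pos hε))) (fun _ => zero_le)
    (fun n => (measure_mono (hsub n)).trans (measure_union_le _ _))

section WeakLaw

variable {Ω : Type*} [MeasurableSpace Ω] {μ : Measure Ω} [IsFiniteMeasure μ]

theorem tendstoInMeasure_average_of_identDistrib {Y : ℕ → Ω → ℝ} (hint : Integrable (Y 0) μ)
    (hindep : Pairwise (Function.onFun (IndepFun · · μ) Y))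
    (hident : ∀ i, IdentDistrib (Y i) (Y 0) μ μ) :
    TendstoInMeasure μ (fun (n : ℕ) ω => (n : ℝ)⁻¹ * ∑ i ∈ Finset.range n, Y i ω) atTop
      (fun _ => μ[Y 0]) := by
  have hmeas : ∀ n : ℕ,
      AEStronglyMeasurable (fun ω => (n : ℝ)⁻¹ * ∑ i ∈ Finset.range n, Y i ω) μ :=
    fun n => (Finset.aestronglyMeasurable_fun_sum _
      fun i _ => (hident i).aemeasurable_fst.aestronglyMeasurable).const_mul _
  refine tendstoInMeasure_of_tendsto_ae hmeas ?_
  filter_upwards [strong_law_ae_real Y hint hindep hident] with ω hω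
  simpa only [div_eq_inv_mul] using hω

theorem tendstoInMeasure_average_comp {E : Type*} [MeasurableSpace E] {X : ℕ → Ω → E}
    (hindep : iIndepFun X μ) (hident : ∀ i, IdentDistrib (X i) (X 0) μ μ) {g : E → ℝ}
    (hg : Measurable g) (hint : Integrable (fun ω => g (X 0 ω)) μ) :
    TendstoInMeasure μ (fun (n : ℕ) ω => (n : ℝ)⁻¹ * ∑ i ∈ Finset.range n, g (X i ω)) atTop
      (fun _ => ∫ ω, g (X 0 ω) ∂μ) :=
  tendstoInMeasure_average_of_identDistrib (Y := fun i ω => g (X i ω)) hint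
    (fun _ _ hij => (hindep.indepFun hij).comp hg hg) (fun i => (hident i).comp hg)

end WeakLaw

theorem stmt2_general {q : ℕ} (Θ : Set (Fin q → ℝ)) (θ₀ : Fin q → ℝ)
    (hΘnhds : Θ ∈ 𝓝 θ₀)
    {Ω : Type*} [MeasurableSpace Ω] (P : Measure Ω) [IsProbabilityMeasure P]
    (θhat : ℕ → Ω → (Fin q → ℝ)) (X : ℕ → Ω → ℝ)
    (hθhatProb : TendstoInMeasure P θhat atTop (fun _ => θ₀))
    (hXmeas : ∀ i, Measurable (X i))
    (hXiid : iIndepFun X P)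
    (hXident : ∀ i, P.map (X i) = P.map (X 0))
    (tmax : ℝ) (htmax : 0 < tmax)
    (hXrange : ∀ i ω, X i ω ∈ Icc 0 tmax)
    (G : (Fin q → ℝ) → ℝ → ℝ)
    (hGcont : ContinuousOn (fun p : (Fin q → ℝ) × ℝ => G p.1 p.2) (Θ ×ˢ Ici 0)) :
    TendstoInMeasure P
      (fun (n : ℕ) ω => (n : ℝ)⁻¹ * ∑ i ∈ Finset.range n, G (θhat n ω) (X i ω))
      atTop (fun _ => ∫ ω, G θ₀ (X 0 ω) ∂P) := by
  have hGcontK : ContinuousOn ↿G (Θ ×ˢ Icc 0 tmax) :=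
    hGcont.mono (prod_mono Subset.rfl Icc_subset_Ici_self)
  have hGθ₀ : ContinuousOn (G θ₀) (Icc 0 tmax) :=
    hGcontK.comp (continuous_const.prodMk continuous_id).continuousOn
      fun s hs => ⟨mem_of_mem_nhds hΘnhds, hs⟩
  -- `G θ₀` need not be measurable off `[0, tmax]`; replace it by its constant extension.
  set g := IccExtend htmax.le ((Icc 0 tmax).domRestrict (G θ₀))
  have hgX : ∀ i ω, g (X i ω) = G θ₀ (X i ω) := fun i ω => IccExtend_of_mem _ _ (hXrange i ω)
  obtain ⟨C, hC⟩ := isCompact_Icc.exists_bound_of_continuousOn hGθ₀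
  have hg : Measurable g := (hGθ₀.domRestrict.Icc_extend' (h := htmax.le)).measurable
  have hint : Integrable (fun ω => g (X 0 ω)) P :=
    .of_bound (hg.comp (hXmeas 0)).aestronglyMeasurable C
      (ae_of_all _ fun ω => hgX 0 ω ▸ hC _ (hXrange 0 ω))
  have hlaw := tendstoInMeasure_average_comp hXiid
    (fun i => ⟨(hXmeas i).aemeasurable, (hXmeas 0).aemeasurable, hXident i⟩) hg hint
  simp_rw [hgX] at hlaw
  refine TendstoInMeasure.of_dist_le hlaw hθhatProb fun ε hε => ?_
  obtain ⟨δ, hδ, hclose⟩ := Metric.eventually_nhds_iff.mp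
    (Metric.tendstoUniformlyOn_iff.mp (hGcontK.tendstoUniformlyOn_of_isCompact hΘnhds
      isCompact_Icc) ε hε)
  refine ⟨δ, hδ, fun n ω hn => ?_⟩
  rw [dist_comm]
  simpa only [Finset.card_range] using
    dist_inv_card_mul_sum_le (s := Finset.range n) hε.le fun i _ => (hclose hn _ (hXrange i ω)).le

/-- Weak law of large numbers with a plugged-in estimator: if `θ̂ n → θ₀` in
probability, the `X i` are i.i.d. with values in `[0, tmax]` and independent of the estimator
sequence, and `G : Θ × [0,∞) → [0,∞)` is jointly continuous, monotone in its second argument and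
uniformly bounded, then `(1/n) ∑_{i<n} G (θ̂ n) (X i)` converges in probability to
`E[G θ₀ X₁]`. -/
theorem stmt2 {q : ℕ} (Θ : Set (Fin q → ℝ)) (θ₀ : Fin q → ℝ)
    (hΘnhds : Θ ∈ 𝓝 θ₀)
    {Ω : Type*} [MeasurableSpace Ω] (P : Measure Ω) [IsProbabilityMeasure P]
    (θhat : ℕ → Ω → (Fin q → ℝ)) (X : ℕ → Ω → ℝ)
    (hθhatΘ : ∀ n ω, θhat n ω ∈ Θ)
    (hθhatProb : TendstoInMeasure P θhat atTop (fun _ => θ₀))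
    (hXmeas : ∀ i, Measurable (X i))
    (hXiid : iIndepFun X P)
    (hXident : ∀ i, P.map (X i) = P.map (X 0))
    (tmax : ℝ) (htmax : 0 < tmax)
    (hXrange : ∀ i ω, X i ω ∈ Icc 0 tmax)
    (hindep : IndepFun (fun ω => fun i => X i ω) (fun ω => fun m => θhat m ω) P)
    (G : (Fin q → ℝ) → ℝ → ℝ)
    (hGcont : ContinuousOn (fun p : (Fin q → ℝ) × ℝ => G p.1 p.2) (Θ ×ˢ Ici 0))
    (hGmono : ∀ θ ∈ Θ, MonotoneOn (G θ) (Ici 0) ∨ AntitoneOn (G θ) (Ici 0))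
    (hGnonneg : ∀ θ ∈ Θ, ∀ s ∈ Ici (0 : ℝ), 0 ≤ G θ s)
    (C : ℝ) (hC : 0 < C)
    (hGbdd : ∀ θ ∈ Θ, ∀ s ∈ Icc 0 tmax, G θ s ≤ C) :
    TendstoInMeasure P
      (fun (n : ℕ) ω => (n : ℝ)⁻¹ * ∑ i ∈ Finset.range n, G (θhat n ω) (X i ω))
      atTop (fun _ => ∫ ω, G θ₀ (X 0 ω) ∂P) :=
  stmt2_general Θ θ₀ hΘnhds P θhat X hθhatProb hXmeas hXiid hXident tmax htmax hXrange G hGcont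
end

section
/- Fix t ∈ (0, t_max]. Under the survival model, the estimator assumption that θ̂^{(m)} → θ_A in probability with (θ̂^{(m)}) independent of the group-B data, and the asymptotic regime, the mean accumulated hazard (1/n_B(k)) ∑_{i=1}^{n_B(k)} Λ(θ̂_A, min(t, X_{B,i})) converges in probability, as k → ∞, to V₁(t) = E[Λ(θ_A, min(t, X_{B,1}))] = P[T_{B,1} ≤ min(C_{B,1}, t)]. -/
open MeasureTheory ProbabilityTheory Filter Topology Set

/-!
For `0 < x < G u`, with `G` a continuous cumulative hazard, the event `G (min T u) > x` is
`T > s` for the largest `s ≤ u` with `G s = x`, so it has probability `exp (-x)`; the layer-cake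
formula then gives `E[G (min T u)] = 1 - exp (-G u) = P[T ≤ u]`, and integrating over the
independent censoring time yields `E[Λ(θ_A, min(t, X))] = P[T ≤ min(C, t)]`.

For the convergence, the strong law of large numbers handles the average at the true parameter
`θ_A`. Joint continuity of `Λ` on `Θ × [0, t]`, with `[0, t]` compact, makes `Λ(θ, ·)` uniformly
close to `Λ(θ_A, ·)` on `[0, t]` for `θ` near `θ_A`, and a consistent estimator is near `θ_A`
with probability tending to one.
-/

-- `G` is only continuous on `[0, ∞)`; composing it with the clamp `x ↦ min (max x 0) u` gives
-- continuous, hence measurable, functions on all of `ℝ`.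
lemma min_max_mem_Icc (x : ℝ) {u : ℝ} (hu : 0 ≤ u) : min (max x 0) u ∈ Icc 0 u :=
  ⟨le_min (le_max_right _ _) hu, min_le_right _ _⟩

lemma mem_Icc_comp_min_max {G : ℝ → ℝ} (hG0 : G 0 = 0) (hGm : MonotoneOn G (Ici 0)) (x : ℝ)
    {u : ℝ} (hu : 0 ≤ u) : G (min (max x 0) u) ∈ Icc 0 (G u) := by
  simpa only [hG0] using
    (hGm.mono (Icc_subset_Ici_self : Icc 0 u ⊆ Ici 0)).mapsTo_Icc (min_max_mem_Icc x hu)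

lemma exists_setOf_lt_comp_min_max_eq_Ioi {G : ℝ → ℝ} (hGc : ContinuousOn G (Ici 0))
    (hGm : MonotoneOn G (Ici 0)) {u x : ℝ} (hu : 0 ≤ u) (hx : G 0 ≤ x) (hxu : x < G u) :
    ∃ s, 0 ≤ s ∧ G s = x ∧ {a | x < G (min (max a 0) u)} = Ioi s := by
  have hGcu : ContinuousOn G (Icc 0 u) := hGc.mono Icc_subset_Ici_self
  obtain ⟨y, hy, hGy⟩ := intermediate_value_Icc hu hGcu ⟨hx, hxu.le⟩
  have hS : IsCompact (Icc 0 u ∩ G ⁻¹' {x}) :=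
    isCompact_Icc.of_isClosed_subset
      (hGcu.preimage_isClosed_of_isClosed isClosed_Icc isClosed_singleton) inter_subset_left
  obtain ⟨s, ⟨⟨hs0, hsu⟩, hGs : G s = x⟩, hsmax⟩ := hS.exists_isGreatest ⟨y, hy, hGy⟩
  refine ⟨s, hs0, hGs, Set.ext fun a => ?_⟩
  have ha := min_max_mem_Icc a hu
  constructor
  · intro hxa
    by_contra has
    have : min (max a 0) u ≤ s := min_le_of_left_le (max_le (not_lt.1 has) hs0)
    exact (hGm ha.1 hs0 this).not_gt (hGs ▸ hxa)
  · intro hsa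
    have hsu' : s < u := hsu.lt_of_ne (by rintro rfl; exact hxu.ne' hGs)
    have hsa' : s < min (max a 0) u := lt_min (lt_max_of_lt_left hsa) hsu'
    exact (hGs ▸ hGm hs0 ha.1 hsa'.le).lt_of_ne fun h => hsa'.not_ge (hsmax ⟨ha, h.symm⟩)

lemma integral_exp_neg_Ioo_zero {a : ℝ} (ha : 0 ≤ a) :
    ∫ x in Ioo 0 a, Real.exp (-x) = 1 - Real.exp (-a) := by
  rw [← integral_Ioc_eq_integral_Ioo, ← intervalIntegral.integral_of_le ha,
    intervalIntegral.integral_comp_neg Real.exp, integral_exp]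
  simp

lemma integral_comp_min_max_eq_measure_Iic {G : ℝ → ℝ} (hGc : ContinuousOn G (Ici 0))
    (hG0 : G 0 = 0) (hGm : MonotoneOn G (Ici 0)) {ν : Measure ℝ} [IsProbabilityMeasure ν]
    (hsurv : ∀ s ∈ Ici (0 : ℝ), ν (Ioi s) = ENNReal.ofReal (Real.exp (-G s))) {u : ℝ}
    (hu : 0 ≤ u) :
    ∫ x, G (min (max x 0) u) ∂ν = (ν (Iic u)).toReal := by
  have hbound := fun x => mem_Icc_comp_min_max hG0 hGm x hu
  have hint : Integrable (fun x => G (min (max x 0) u)) ν :=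
    .of_mem_Icc 0 (G u) (hGc.comp_continuous (by fun_prop)
      fun x => (min_max_mem_Icc x hu).1).aemeasurable (.of_forall hbound)
  have hlevel : ∀ x ∈ Ioi (0 : ℝ), ν.real {a | x < G (min (max a 0) u)} =
      (Ioo 0 (G u)).indicator (fun x => Real.exp (-x)) x := by
    intro x hx
    rw [mem_Ioi] at hx
    by_cases hxu : x < G u
    · obtain ⟨s, hs0, rfl, hset⟩ :=
        exists_setOf_lt_comp_min_max_eq_Ioi hGc hGm hu (hG0.trans_le hx.le) hxu
      rw [hset, measureReal_def, hsurv s hs0, indicator_of_mem (mem_Ioo.2 ⟨hx, hxu⟩),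
        ENNReal.toReal_ofReal (Real.exp_nonneg _)]
    · have : {a | x < G (min (max a 0) u)} = ∅ :=
        eq_empty_of_forall_notMem fun a ha => hxu ((ha : x < _).trans_le (hbound a).2)
      rw [this, indicator_of_notMem fun h => hxu h.2, measureReal_empty]
  have hGu : 0 ≤ G u := (hbound 0).1.trans (hbound 0).2
  rw [hint.integral_eq_integral_meas_lt (.of_forall fun x => (hbound x).1),
    setIntegral_congr_fun measurableSet_Ioi hlevel, integral_indicator measurableSet_Ioo,
    Measure.restrict_restrict measurableSet_Ioo, Ioo_inter_Ioi, max_self,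
    integral_exp_neg_Ioo_zero hGu, ← compl_Ioi, prob_compl_eq_one_sub measurableSet_Ioi,
    hsurv u hu, ENNReal.toReal_sub_of_le (ENNReal.ofReal_le_one.2 (Real.exp_le_one_iff.2
      (neg_nonpos.2 hGu))) ENNReal.one_ne_top, ENNReal.toReal_one,
    ENNReal.toReal_ofReal (Real.exp_nonneg _)]

lemma min_max_min_eq (x c : ℝ) {t : ℝ} :
    min (max (min x c) 0) t = min (max x 0) (min (max c 0) t) := by
  rw [max_min_distrib_right, min_assoc]

lemma integral_comp_min_eq_measure_le {Ω : Type*} [MeasurableSpace Ω] {P : Measure Ω}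
    [IsProbabilityMeasure P] {G : ℝ → ℝ} (hGc : ContinuousOn G (Ici 0)) (hG0 : G 0 = 0)
    (hGm : MonotoneOn G (Ici 0)) {T C : Ω → ℝ} (hT : Measurable T) (hC : Measurable C)
    (hTnn : ∀ ω, 0 ≤ T ω) (hCnn : ∀ ω, 0 ≤ C ω) (hTC : IndepFun T C P)
    (hsurv : ∀ s ∈ Ici (0 : ℝ), P {ω | s < T ω} = ENNReal.ofReal (Real.exp (-G s)))
    {t : ℝ} (ht : 0 ≤ t) :
    ∫ ω, G (min t (min (T ω) (C ω))) ∂P = (P {ω | T ω ≤ min (C ω) t}).toReal := by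
  set μT := P.map T
  set μC := P.map C
  have := Measure.isProbabilityMeasure_map (μ := P) hT.aemeasurable
  have hsurvT : ∀ s ∈ Ici (0 : ℝ), μT (Ioi s) = ENNReal.ofReal (Real.exp (-G s)) :=
    fun s hs => (Measure.map_apply hT measurableSet_Ioi).trans (hsurv s hs)
  have hρ := hTC.symm.map_prod_eq_prod_map_map hC.aemeasurable hT.aemeasurable
  set g : ℝ × ℝ → ℝ := fun p => G (min (max (min p.2 p.1) 0) t)
  have hg : Continuous g := hGc.comp_continuous (by fun_prop) fun p => (min_max_mem_Icc _ ht).1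
  have hint : Integrable g (μC.prod μT) :=
    .of_mem_Icc 0 (G t) hg.aemeasurable (.of_forall fun p => mem_Icc_comp_min_max hG0 hGm _ ht)
  have hinner : ∀ c, 0 ≤ c → ∫ x, g (c, x) ∂μT = (μT (Iic (min c t))).toReal := by
    intro c hc
    simp only [g, min_max_min_eq, max_eq_left hc]
    exact integral_comp_min_max_eq_measure_Iic hGc hG0 hGm hsurvT (le_min hc ht)
  have hCae : ∀ᵐ c ∂μC, 0 ≤ c :=
    (ae_map_iff hC.aemeasurable measurableSet_Ici).2 (.of_forall hCnn)
  have hset : MeasurableSet {p : ℝ × ℝ | p.2 ≤ min p.1 t} :=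
    measurableSet_le (by fun_prop) (by fun_prop)
  calc ∫ ω, G (min t (min (T ω) (C ω))) ∂P = ∫ p, g p ∂(P.map fun ω => (C ω, T ω)) := by
        rw [integral_map (by fun_prop) hg.aestronglyMeasurable]
        simp only [g, max_eq_left (le_min (hTnn _) (hCnn _)), min_comm _ t]
    _ = ∫ c, ∫ x, g (c, x) ∂μT ∂μC := by rw [hρ, integral_prod g hint]
    _ = ∫ c, (μT (Iic (min c t))).toReal ∂μC := integral_congr_ae (hCae.mono hinner)
    _ = ((μC.prod μT) {p | p.2 ≤ min p.1 t}).toReal := by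
        have hmono : Monotone fun c => μT (Iic (min c t)) := fun a b hab =>
          measure_mono (Iic_subset_Iic.2 (min_le_min_right t hab))
        rw [integral_toReal hmono.measurable.aemeasurable (.of_forall fun _ => measure_lt_top _ _),
          Measure.prod_apply hset]
        rfl
    _ = _ := by rw [← hρ, Measure.map_apply (by fun_prop) hset]; rfl

theorem ContinuousOn.tendstoUniformlyOn {α β E : Type*} [TopologicalSpace α]
    [TopologicalSpace β] [UniformSpace E] {f : α → β → E} {x : α} {U : Set α} {K : Set β}
    (hK : IsCompact K) (hU : U ∈ 𝓝 x) (hf : ContinuousOn ↿f (U ×ˢ K)) :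
    TendstoUniformlyOn f (f x) (𝓝 x) K := by
  intro u hu
  obtain ⟨v, hv, hvu⟩ :=
    hK.mem_uniformity_of_prod hf (mem_of_mem_nhds hU) (symm_le_uniformity hu)
  rw [nhdsWithin_eq_nhds.2 hU] at hv
  exact mem_of_superset hv hvu

lemma dist_average_le {f g : ℕ → ℝ} {n : ℕ} {ε : ℝ} (hε : 0 ≤ ε)
    (h : ∀ i ∈ Finset.range n, dist (f i) (g i) ≤ ε) :
    dist ((n : ℝ)⁻¹ * ∑ i ∈ Finset.range n, f i) ((n : ℝ)⁻¹ * ∑ i ∈ Finset.range n, g i)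
      ≤ ε := by
  rcases n.eq_zero_or_pos with rfl | hn
  · simpa using hε
  calc _ = (n : ℝ)⁻¹ * dist (∑ i ∈ Finset.range n, f i) (∑ i ∈ Finset.range n, g i) := by
        rw [← smul_eq_mul, ← smul_eq_mul, dist_smul₀, Real.norm_of_nonneg (by positivity)]
    _ ≤ (n : ℝ)⁻¹ * ∑ _i ∈ Finset.range n, ε := by
        gcongr; exact dist_sum_sum_le_of_le _ h
    _ = ε := by simp [field]

lemma tendstoInMeasure_average_of_iIndepFun {Ω β : Type*} [MeasurableSpace Ω]
    [MeasurableSpace β] {P : Measure Ω} [IsFiniteMeasure P] {Z : ℕ → Ω → β}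
    (hZ : ∀ i, AEMeasurable (Z i) P) (hiid : iIndepFun Z P)
    (hident : ∀ i, P.map (Z i) = P.map (Z 0)) {g : β → ℝ} (hg : Measurable g)
    (hint : Integrable (fun ω => g (Z 0 ω)) P) {n : ℕ → ℕ} (hn : Tendsto n atTop atTop) :
    TendstoInMeasure P (fun k ω => (n k : ℝ)⁻¹ * ∑ i ∈ Finset.range (n k), g (Z i ω)) atTop
      (fun _ => ∫ ω, g (Z 0 ω) ∂P) := by
  have hident' : ∀ i, IdentDistrib (fun ω => g (Z i ω)) (fun ω => g (Z 0 ω)) P P :=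
    fun i => (IdentDistrib.mk (hZ i) (hZ 0) (hident i)).comp hg
  have hmeas : ∀ i, AEMeasurable (fun ω => g (Z i ω)) P := fun i => (hident' i).aemeasurable_fst
  refine tendstoInMeasure_of_tendsto_ae (fun k => ?_) ?_
  · exact (Finset.aemeasurable_fun_sum _ fun i _ => hmeas i).const_mul _ |>.aestronglyMeasurable
  · filter_upwards [strong_law_ae_real (fun i ω => g (Z i ω)) hint
      (fun i j hij => (hiid.comp (fun _ => g) fun _ => hg).indepFun hij) hident'] with ω hω
    simpa only [Function.comp_def, inv_mul_eq_div] using hω.comp hn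

lemma MeasureTheory.TendstoInMeasure.average_of_tendstoUniformlyOn {Ω ι E α : Type*}
    [MeasurableSpace Ω] {P : Measure Ω} {l : Filter ι} [PseudoMetricSpace E] {F : E → α → ℝ}
    {θ₀ : E} {K : Set α} {X : ℕ → Ω → α} {n : ι → ℕ} {c : ℝ}
    (hA : TendstoInMeasure P (fun k ω => (n k : ℝ)⁻¹ * ∑ i ∈ Finset.range (n k), F θ₀ (X i ω))
      l (fun _ => c))
    (hF : TendstoUniformlyOn F (F θ₀) (𝓝 θ₀) K) {θ : ι → Ω → E}
    (hθ : TendstoInMeasure P θ l (fun _ => θ₀)) (hX : ∀ i ω, X i ω ∈ K) :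
    TendstoInMeasure P (fun k ω => (n k : ℝ)⁻¹ * ∑ i ∈ Finset.range (n k), F (θ k ω) (X i ω))
      l (fun _ => c) := by
  rw [tendstoInMeasure_iff_dist] at hθ hA ⊢
  intro ε hε
  obtain ⟨δ, hδ, hclose⟩ := Metric.eventually_nhds_iff.1
    (Metric.tendstoUniformlyOn_iff.1 hF (ε / 2) (half_pos hε))
  have hsub : ∀ k, {ω | ε ≤ dist ((n k : ℝ)⁻¹ * ∑ i ∈ Finset.range (n k), F (θ k ω) (X i ω)) c}
      ⊆ {ω | δ ≤ dist (θ k ω) θ₀} ∪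
        {ω | ε / 2 ≤ dist ((n k : ℝ)⁻¹ * ∑ i ∈ Finset.range (n k), F θ₀ (X i ω)) c} := by
    intro k ω hω
    rw [mem_ofPred] at hω
    by_contra! h
    simp only [mem_union, mem_ofPred, not_or, not_le] at h
    have hplug := dist_average_le (n := n k) (half_pos hε).le fun i _ =>
      (dist_comm _ _).trans_le (hclose h.1 (X i ω) (hX i ω)).le
    exact hω.not_gt ((dist_triangle _ _ c).trans_lt
      ((add_lt_add_of_le_of_lt hplug h.2).trans_eq (add_halves ε)))
  refine tendsto_of_tendsto_of_tendsto_of_le_of_le tendsto_const_nhds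
    (by simpa using (hθ δ hδ).add (hA (ε / 2) (half_pos hε))) (fun _ => zero_le)
    fun k => (measure_mono (hsub k)).trans (measure_union_le _ _)

theorem stmt6_general {q : ℕ}
    -- survival model
    (Θ : Set (Fin q → ℝ)) (hΘopen : IsOpen Θ) (θA : Fin q → ℝ) (hθA : θA ∈ Θ)
    (Λ : (Fin q → ℝ) → ℝ → ℝ)
    (hΛcont : ContinuousOn (fun p : (Fin q → ℝ) × ℝ => Λ p.1 p.2) (Θ ×ˢ Ici 0))
    (hΛ0 : ∀ θ ∈ Θ, Λ θ 0 = 0)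
    (hΛmono : ∀ θ ∈ Θ, MonotoneOn (Λ θ) (Ici 0))
    (tmax : ℝ)
    {Ω : Type*} [MeasurableSpace Ω] (P : Measure Ω) [IsProbabilityMeasure P]
    (T C : ℕ → Ω → ℝ)
    (hT : ∀ i, Measurable (T i)) (hC : ∀ i, Measurable (C i))
    (hTnonneg : ∀ i ω, 0 ≤ T i ω) (hCnonneg : ∀ i ω, 0 ≤ C i ω)
    (hiid : iIndepFun (fun i ω => (T i ω, C i ω)) P)
    (hident : ∀ i, P.map (fun ω => (T i ω, C i ω)) = P.map (fun ω => (T 0 ω, C 0 ω)))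
    (hTC : ∀ i, IndepFun (T i) (C i) P)
    (hsurv : ∀ i, ∀ s ∈ Ici (0 : ℝ),
      P {ω | s < T i ω} = ENNReal.ofReal (Real.exp (-(Λ θA s))))
    -- the fixed time point
    (t : ℝ) (ht : t ∈ Ioc 0 tmax)
    -- estimator assumptions
    (θhat : ℕ → Ω → (Fin q → ℝ))
    (hθhatprob : TendstoInMeasure P θhat atTop (fun _ => θA))
    -- asymptotic regime
    (nA nB : ℕ → ℕ) (hnA : Tendsto nA atTop atTop) (hnB : Tendsto nB atTop atTop)
    -- the limiting variance
    (V₁ : ℝ) (hV₁ : V₁ = ∫ ω, Λ θA (min t (min (T 0 ω) (C 0 ω))) ∂P) :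
    TendstoInMeasure P
      (fun k ω => (nB k : ℝ)⁻¹ *
        ∑ i ∈ Finset.range (nB k), Λ (θhat (nA k) ω) (min t (min (T i ω) (C i ω))))
      atTop (fun _ => V₁)
    ∧ V₁ = (P {ω | T 0 ω ≤ min (C 0 ω) t}).toReal := by
  have hΛθA : ContinuousOn (Λ θA) (Ici 0) :=
    hΛcont.comp (continuous_const.prodMk continuous_id).continuousOn fun s hs => ⟨hθA, hs⟩
  have hX : ∀ i ω, min t (min (T i ω) (C i ω)) ∈ Icc 0 t := fun i ω =>
    ⟨le_min ht.1.le (le_min (hTnonneg i ω) (hCnonneg i ω)), min_le_left _ _⟩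
  set g : ℝ × ℝ → ℝ := fun p => Λ θA (min (max (min p.1 p.2) 0) t)
  have hg : Continuous g :=
    hΛθA.comp_continuous (by fun_prop) fun p => (min_max_mem_Icc _ ht.1.le).1
  have hgZ : ∀ i ω, g (T i ω, C i ω) = Λ θA (min t (min (T i ω) (C i ω))) := fun i ω => by
    simp only [g, max_eq_left (le_min (hTnonneg i ω) (hCnonneg i ω)), min_comm _ t]
  have hLLN := tendstoInMeasure_average_of_iIndepFun
    (fun i => ((hT i).prodMk (hC i)).aemeasurable) hiid hident hg.measurable
    (.of_mem_Icc 0 (Λ θA t) (hg.measurable.comp_aemeasurable ((hT 0).prodMk (hC 0)).aemeasurable)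
      (.of_forall fun ω => mem_Icc_comp_min_max (hΛ0 θA hθA) (hΛmono θA hθA) _ ht.1.le)) hnB
  have hA : TendstoInMeasure P (fun k ω => (nB k : ℝ)⁻¹ *
      ∑ i ∈ Finset.range (nB k), Λ θA (min t (min (T i ω) (C i ω)))) atTop (fun _ => V₁) := by
    simpa only [hgZ, ← hV₁] using hLLN
  have hunif : TendstoUniformlyOn Λ (Λ θA) (𝓝 θA) (Icc 0 t) :=
    ContinuousOn.tendstoUniformlyOn isCompact_Icc (hΘopen.mem_nhds hθA)
      (hΛcont.mono (prod_mono subset_rfl Icc_subset_Ici_self))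
  refine ⟨hA.average_of_tendstoUniformlyOn hunif (hθhatprob.comp hnA) hX, ?_⟩
  rw [hV₁]
  exact integral_comp_min_eq_measure_le hΛθA (hΛ0 θA hθA) (hΛmono θA hθA) (hT 0) (hC 0)
    (hTnonneg 0) (hCnonneg 0) (hTC 0) (hsurv 0) ht.1.le

/-- Under the parametric survival model, consistency of the estimator sequence
(independent of the group-B data) and the asymptotic regime, the mean accumulated hazard
`(1/n_B(k)) ∑_{i<n_B(k)} Λ(θ̂_A, min(t, X_i))` converges in probability to
`V₁(t) = E[Λ(θ_A, min(t, X_1))] = P[T_1 ≤ min(C_1, t)]`. -/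
theorem stmt6 {q : ℕ}
    -- survival model
    (Θ : Set (Fin q → ℝ)) (hΘopen : IsOpen Θ) (θA : Fin q → ℝ) (hθA : θA ∈ Θ)
    (Λ : (Fin q → ℝ) → ℝ → ℝ)
    (hΛcont : ContinuousOn (fun p : (Fin q → ℝ) × ℝ => Λ p.1 p.2) (Θ ×ˢ Ici 0))
    (hΛ0 : ∀ θ ∈ Θ, Λ θ 0 = 0)
    (hΛmono : ∀ θ ∈ Θ, MonotoneOn (Λ θ) (Ici 0))
    (hΛnonneg : ∀ θ ∈ Θ, ∀ s ∈ Ici (0 : ℝ), 0 ≤ Λ θ s)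
    (tmax : ℝ) (htmax : 0 < tmax)
    {Ω : Type*} [MeasurableSpace Ω] (P : Measure Ω) [IsProbabilityMeasure P]
    (T C : ℕ → Ω → ℝ)
    (hT : ∀ i, Measurable (T i)) (hC : ∀ i, Measurable (C i))
    (hTnonneg : ∀ i ω, 0 ≤ T i ω) (hCnonneg : ∀ i ω, 0 ≤ C i ω)
    (hiid : iIndepFun (fun i ω => (T i ω, C i ω)) P)
    (hident : ∀ i, P.map (fun ω => (T i ω, C i ω)) = P.map (fun ω => (T 0 ω, C 0 ω)))
    (hTC : ∀ i, IndepFun (T i) (C i) P)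
    (hsurv : ∀ i, ∀ s ∈ Ici (0 : ℝ),
      P {ω | s < T i ω} = ENNReal.ofReal (Real.exp (-(Λ θA s))))
    (hXle : ∀ i, ∀ᵐ ω ∂P, min (T i ω) (C i ω) ≤ tmax)
    -- the fixed time point
    (t : ℝ) (ht : t ∈ Ioc 0 tmax)
    -- estimator assumptions
    (θhat : ℕ → Ω → (Fin q → ℝ))
    (hθhatmeas : ∀ m, Measurable (θhat m))
    (hθhatΘ : ∀ m ω, θhat m ω ∈ Θ)
    (hθhatindep : IndepFun (fun ω => fun m => θhat m ω) (fun ω => fun i => (T i ω, C i ω)) P)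
    (hθhatprob : TendstoInMeasure P θhat atTop (fun _ => θA))
    -- asymptotic regime
    (nA nB : ℕ → ℕ) (hnA : Tendsto nA atTop atTop) (hnB : Tendsto nB atTop atTop)
    (π : ℝ) (hπ : 0 < π)
    (hratio : Tendsto (fun k => (nB k : ℝ) / (nA k : ℝ)) atTop (𝓝 π))
    -- the limiting variance
    (V₁ : ℝ) (hV₁ : V₁ = ∫ ω, Λ θA (min t (min (T 0 ω) (C 0 ω))) ∂P) :
    TendstoInMeasure P
      (fun k ω => (nB k : ℝ)⁻¹ *
        ∑ i ∈ Finset.range (nB k), Λ (θhat (nA k) ω) (min t (min (T i ω) (C i ω))))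
      atTop (fun _ => V₁)
    ∧ V₁ = (P {ω | T 0 ω ≤ min (C 0 ω) t}).toReal :=
  stmt6_general Θ hΘopen θA hθA Λ hΛcont hΛ0 hΛmono tmax P T C hT hC hTnonneg hCnonneg hiid hident
    hTC hsurv t ht θhat hθhatprob nA nB hnA hnB V₁ hV₁
end

section
/- Fix t ∈ (0, t_max] and w ∈ [0,1]. Under the survival model, the estimator assumption that θ̂^{(m)} → θ_A in probability with (θ̂^{(m)}) independent of the group-B data, and the asymptotic regime, the weighted variance estimator (1/n_B(k)) ( w · N_B(t) + (1−w) · ∑_{i=1}^{n_B(k)} Λ(θ̂_A, min(t, X_{B,i})) ) converges in probability, as k → ∞, to V₁(t). -/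
/-!
Write `Z = min(t, T, C)` for a generic observation. The event indicator `1(T ≤ min(t, C))` and
the compensator `Λ(θ_A, Z)` have the same mean: conditionally on `C = c` both equal
`1 - exp(-Λ(θ_A, min(t, c)))`, the first by the survival function, the second by the layer-cake
formula, whose level sets are half-lines `{T > σ}`. So by the strong law the oracle estimator,
which uses `θ_A` in place of `θ̂_A`, converges almost surely to `V₁(t)`. As `Z` ranges over the
compact `[0, t]`, `Λ(θ, ·)` is uniformly `ε`-close to `Λ(θ_A, ·)` there once `θ` is `δ`-close to
`θ_A`, so the plug-in estimator is `ε`-close to the oracle on an event whose probability tends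
to one.
-/

open MeasureTheory ProbabilityTheory Filter Topology Set

lemma Monotone.nonneg_of_forall_nonpos {G : ℝ → ℝ} (hGm : Monotone G)
    (hG0 : ∀ s ≤ 0, G s = 0) (s : ℝ) : 0 ≤ G s :=
  (hG0 _ (min_le_left 0 s)).symm.trans_le (hGm (min_le_right 0 s))

lemma Monotone.norm_comp_min_le {G : ℝ → ℝ} (hGm : Monotone G) (hG0 : ∀ s ≤ 0, G s = 0)
    (t x : ℝ) : ‖G (min t x)‖ ≤ G t := by
  rw [Real.norm_of_nonneg (hGm.nonneg_of_forall_nonpos hG0 _)]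
  exact hGm (min_le_left _ _)

lemma Monotone.exists_preimage_Ioi_eq_Ioi {G : ℝ → ℝ} (hGm : Monotone G) (hGc : Continuous G)
    {a b y : ℝ} (ha : G a ≤ y) (hb : y < G b) :
    ∃ σ, G σ = y ∧ G ⁻¹' Ioi y = Ioi σ := by
  set S := G ⁻¹' Iic y
  have hSbdd : BddAbove S := ⟨b, fun s hs => (hGm.reflect_lt (lt_of_le_of_lt hs hb)).le⟩
  have hσS : sSup S ∈ S := (isClosed_Iic.preimage hGc).csSup_mem ⟨a, ha⟩ hSbdd
  have hpre : G ⁻¹' Ioi y = Ioi (sSup S) := by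
    ext s
    simp only [mem_preimage, mem_Ioi]
    refine ⟨fun hs => lt_of_not_ge fun h => ?_, fun hs => lt_of_not_ge fun h => ?_⟩
    · exact (hGm h |>.trans hσS).not_gt hs
    · exact (le_csSup hSbdd h).not_gt hs
  refine ⟨sSup S, le_antisymm hσS ?_, hpre⟩
  exact _root_.ge_of_tendsto (hGc.continuousWithinAt (s := Ioi (sSup S)))
    (eventually_nhdsWithin_of_forall fun s hs => le_of_lt (show s ∈ G ⁻¹' Ioi y from hpre ▸ hs))

lemma integral_comp_min_of_survival {G : ℝ → ℝ} (hGc : Continuous G) (hGm : Monotone G)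
    (hG0 : ∀ s ≤ 0, G s = 0) {ν : Measure ℝ} [IsProbabilityMeasure ν]
    (hν : ∀ s, ν (Ioi s) = ENNReal.ofReal (Real.exp (-G s))) (u : ℝ) :
    ∫ τ, G (min u τ) ∂ν = 1 - Real.exp (-G u) := by
  have hGnn := hGm.nonneg_of_forall_nonpos hG0
  have hint : Integrable (fun τ => G (min u τ)) ν :=
    .of_bound (hGc.comp (by fun_prop)).aestronglyMeasurable (G u)
      (.of_forall fun _ => hGm.norm_comp_min_le hG0 _ _)
  have hlevel : ∀ y ∈ Ioi (0 : ℝ), ν.real {τ | y < G (min u τ)} =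
      (Ioo 0 (G u)).indicator (fun y => Real.exp (-y)) y := by
    intro y hy
    by_cases hyu : y < G u
    · obtain ⟨σ, hσ, hpre⟩ := hGm.exists_preimage_Ioi_eq_Ioi hGc ((hG0 0 le_rfl).trans_le hy.le) hyu
      have hset : {τ | y < G (min u τ)} = Ioi σ := by
        rw [← hpre]; ext τ; simp [hGm.map_min, hyu]
      rw [hset, measureReal_def, hν, hσ, ENNReal.toReal_ofReal (Real.exp_nonneg _),
        indicator_of_mem (show y ∈ Ioo 0 (G u) from ⟨hy, hyu⟩)]
    · have hset : {τ | y < G (min u τ)} = ∅ :=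
        eq_empty_of_forall_notMem fun τ hτ => hyu (hτ.trans_le (hGm (min_le_left _ _)))
      rw [hset, measureReal_empty, indicator_of_notMem fun h => hyu h.2]
  rw [hint.integral_eq_integral_meas_lt (.of_forall fun τ => hGnn _),
    setIntegral_congr_fun measurableSet_Ioi hlevel, setIntegral_indicator measurableSet_Ioo,
    inter_eq_right.mpr Ioo_subset_Ioi_self, ← integral_Ioc_eq_integral_Ioo,
    ← intervalIntegral.integral_of_le (hGnn u), intervalIntegral.integral_comp_neg, integral_exp]
  simp

lemma integral_ite_le_of_survival {ν : Measure ℝ} [IsProbabilityMeasure ν] {u a : ℝ}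
    (hν : ν (Ioi u) = ENNReal.ofReal (Real.exp (-a))) :
    ∫ τ, (if τ ≤ u then (1 : ℝ) else 0) ∂ν = 1 - Real.exp (-a) := by
  have hind : (fun τ : ℝ => if τ ≤ u then (1 : ℝ) else 0) = (Iic u).indicator 1 := by
    ext τ; simp [indicator_apply]
  rw [hind, integral_indicator_one measurableSet_Iic, ← compl_Ioi,
    probReal_compl_eq_one_sub measurableSet_Ioi, measureReal_def, hν,
    ENNReal.toReal_ofReal (Real.exp_nonneg _)]

lemma measurable_ite_fst_le_min (t : ℝ) :
    Measurable fun p : ℝ × ℝ => if p.1 ≤ min t p.2 then (1 : ℝ) else 0 :=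
  Measurable.ite (measurableSet_le measurable_fst (by fun_prop)) measurable_const measurable_const

lemma Continuous.comp_min_min {G : ℝ → ℝ} (hGc : Continuous G) (t : ℝ) :
    Continuous fun p : ℝ × ℝ => G (min t (min p.1 p.2)) :=
  hGc.comp (by fun_prop)

lemma integral_prod_ite_le_min_eq_integral_comp_min {G : ℝ → ℝ} (hGc : Continuous G)
    (hGm : Monotone G) (hG0 : ∀ s ≤ 0, G s = 0) {μT μC : Measure ℝ} [IsProbabilityMeasure μT]
    [IsFiniteMeasure μC] (hμT : ∀ s, μT (Ioi s) = ENNReal.ofReal (Real.exp (-G s))) (t : ℝ) :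
    ∫ p, (if p.1 ≤ min t p.2 then (1 : ℝ) else 0) ∂(μT.prod μC)
      = ∫ p, G (min t (min p.1 p.2)) ∂(μT.prod μC) := by
  have hint₁ : Integrable (fun p : ℝ × ℝ => if p.1 ≤ min t p.2 then (1 : ℝ) else 0)
      (μT.prod μC) :=
    .of_bound (measurable_ite_fst_le_min t).aestronglyMeasurable 1
      (.of_forall fun p => by split_ifs <;> simp)
  have hint₂ : Integrable (fun p : ℝ × ℝ => G (min t (min p.1 p.2))) (μT.prod μC) :=
    .of_bound (hGc.comp_min_min t).aestronglyMeasurable (G t)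
      (.of_forall fun _ => hGm.norm_comp_min_le hG0 _ _)
  rw [integral_prod_symm _ hint₁, integral_prod_symm _ hint₂]
  refine integral_congr_ae (.of_forall fun c => ?_)
  dsimp only
  rw [integral_ite_le_of_survival (hμT _),
    ← integral_comp_min_of_survival hGc hGm hG0 hμT (min t c)]
  congr 1 with τ
  rw [min_assoc, min_comm τ c]

lemma integral_ite_le_min_eq_integral_comp_min {Ω : Type*} [MeasurableSpace Ω] {P : Measure Ω}
    [IsProbabilityMeasure P] {T C : Ω → ℝ} (hT : Measurable T) (hC : Measurable C)
    (hTC : IndepFun T C P) (hTnonneg : ∀ ω, 0 ≤ T ω) {G : ℝ → ℝ} (hGc : Continuous G)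
    (hGm : Monotone G) (hG0 : ∀ s ≤ 0, G s = 0)
    (hsurv : ∀ s ∈ Ici (0 : ℝ), P {ω | s < T ω} = ENNReal.ofReal (Real.exp (-G s))) (t : ℝ) :
    ∫ ω, (if T ω ≤ min t (C ω) then (1 : ℝ) else 0) ∂P
      = ∫ ω, G (min t (min (T ω) (C ω))) ∂P := by
  have := Measure.isProbabilityMeasure_map (μ := P) hT.aemeasurable
  have := Measure.isProbabilityMeasure_map (μ := P) hC.aemeasurable
  have hprod : P.map (fun ω => (T ω, C ω)) = (P.map T).prod (P.map C) :=
    (indepFun_iff_map_prod_eq_prod_map_map hT.aemeasurable hC.aemeasurable).mp hTC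
  have hμT s : P.map T (Ioi s) = ENNReal.ofReal (Real.exp (-G s)) := by
    rw [Measure.map_apply hT measurableSet_Ioi]
    rcases le_or_gt 0 s with hs | hs
    · exact hsurv s hs
    · have huniv : T ⁻¹' Ioi s = univ := eq_univ_of_forall fun ω => hs.trans_le (hTnonneg ω)
      simp [huniv, hG0 s hs.le]
  have h := integral_prod_ite_le_min_eq_integral_comp_min hGc hGm hG0 hμT (μC := P.map C) t
  rwa [← hprod,
    integral_map (hT.prodMk hC).aemeasurable (measurable_ite_fst_le_min t).aestronglyMeasurable,
    integral_map (hT.prodMk hC).aemeasurable (hGc.comp_min_min t).aestronglyMeasurable] at h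

lemma strong_law_ae_real_comp {Ω α : Type*} [MeasurableSpace Ω] [MeasurableSpace α]
    {P : Measure Ω} [IsFiniteMeasure P] {Z : ℕ → Ω → α} (hZ : ∀ i, Measurable (Z i))
    (hindep : iIndepFun Z P) (hident : ∀ i, P.map (Z i) = P.map (Z 0)) {f : α → ℝ}
    (hf : Measurable f) {K : ℝ} (hfK : ∀ x, ‖f x‖ ≤ K) :
    ∀ᵐ ω ∂P, Tendsto (fun n : ℕ => (∑ i ∈ Finset.range n, f (Z i ω)) / n) atTop
      (𝓝 (∫ ω, f (Z 0 ω) ∂P)) :=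
  strong_law_ae_real (fun i ω => f (Z i ω))
    (.of_bound (hf.comp (hZ 0)).aestronglyMeasurable K (.of_forall fun _ => hfK _))
    (fun _ _ hij => (hindep.comp (fun _ => f) fun _ => hf).indepFun hij)
    (fun i => IdentDistrib.comp ⟨(hZ i).aemeasurable, (hZ 0).aemeasurable, hident i⟩ hf)

lemma tendsto_inv_mul_weighted_sum {a b : ℕ → ℝ} {c : ℝ} (w : ℝ)
    (ha : Tendsto (fun n : ℕ => (∑ i ∈ Finset.range n, a i) / n) atTop (𝓝 c))
    (hb : Tendsto (fun n : ℕ => (∑ i ∈ Finset.range n, b i) / n) atTop (𝓝 c)) :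
    Tendsto (fun n : ℕ => (n : ℝ)⁻¹ *
      (w * ∑ i ∈ Finset.range n, a i + (1 - w) * ∑ i ∈ Finset.range n, b i)) atTop (𝓝 c) := by
  convert (ha.const_mul w).add (hb.const_mul (1 - w)) using 2 <;> ring

lemma tendstoInMeasure_inv_mul_weighted_sum_comp {Ω α : Type*} [MeasurableSpace Ω]
    [MeasurableSpace α] {P : Measure Ω} [IsFiniteMeasure P] {Z : ℕ → Ω → α}
    (hZ : ∀ i, Measurable (Z i)) (hindep : iIndepFun Z P)
    (hident : ∀ i, P.map (Z i) = P.map (Z 0)) {f g : α → ℝ} (hf : Measurable f)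
    (hg : Measurable g) {K L : ℝ} (hfK : ∀ x, ‖f x‖ ≤ K) (hgL : ∀ x, ‖g x‖ ≤ L) {c : ℝ}
    (hfc : ∫ ω, f (Z 0 ω) ∂P = c) (hgc : ∫ ω, g (Z 0 ω) ∂P = c) (w : ℝ) {n : ℕ → ℕ}
    (hn : Tendsto n atTop atTop) :
    TendstoInMeasure P (fun k ω => (n k : ℝ)⁻¹ *
      (w * ∑ i ∈ Finset.range (n k), f (Z i ω) + (1 - w) * ∑ i ∈ Finset.range (n k), g (Z i ω)))
      atTop (fun _ => c) := by
  have hfZ i : Measurable fun ω => f (Z i ω) := hf.comp (hZ i)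
  have hgZ i : Measurable fun ω => g (Z i ω) := hg.comp (hZ i)
  refine tendstoInMeasure_of_tendsto_ae
    (fun k => (by fun_prop : Measurable _).aestronglyMeasurable) ?_
  filter_upwards [strong_law_ae_real_comp hZ hindep hident hf hfK,
    strong_law_ae_real_comp hZ hindep hident hg hgL] with ω hfω hgω
  exact (tendsto_inv_mul_weighted_sum w (hfc ▸ hfω) (hgc ▸ hgω)).comp hn

lemma dist_inv_mul_weighted_sum_le {n : ℕ} {w ε : ℝ} (hw : w ∈ Icc (0 : ℝ) 1)
    {a b b' : ℕ → ℝ} (hb : ∀ i, dist (b i) (b' i) ≤ ε) :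
    dist ((n : ℝ)⁻¹ * (w * ∑ i ∈ Finset.range n, a i + (1 - w) * ∑ i ∈ Finset.range n, b i))
      ((n : ℝ)⁻¹ * (w * ∑ i ∈ Finset.range n, a i + (1 - w) * ∑ i ∈ Finset.range n, b' i))
      ≤ ε := by
  have hε : 0 ≤ ε := dist_nonneg.trans (hb 0)
  have hsum : |∑ i ∈ Finset.range n, (b i - b' i)| ≤ n * ε :=
    (Finset.abs_sum_le_sum_abs _ _).trans <|
      (Finset.sum_le_sum fun i _ => (Real.dist_eq _ _).symm.trans_le (hb i)).trans_eq (by simp)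
  rw [Real.dist_eq, show ∀ x y z : ℝ, (n : ℝ)⁻¹ * (x + (1 - w) * y) - (n : ℝ)⁻¹ * (x + (1 - w) * z)
    = (n : ℝ)⁻¹ * (1 - w) * (y - z) from fun x y z => by ring, ← Finset.sum_sub_distrib,
    abs_mul, abs_mul, abs_of_nonneg (inv_nonneg.mpr n.cast_nonneg),
    abs_of_nonneg (by linarith [hw.2])]
  rcases n.eq_zero_or_pos with rfl | hn
  · simpa using hε
  calc (n : ℝ)⁻¹ * (1 - w) * |∑ i ∈ Finset.range n, (b i - b' i)|
      ≤ (n : ℝ)⁻¹ * 1 * (n * ε) := by gcongr; linarith [hw.1]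
    _ = ε := by field_simp

lemma TendstoInMeasure.of_forall_dist_le {Ω ι X E : Type*} [MeasurableSpace Ω] {μ : Measure Ω}
    {l : Filter ι} [PseudoMetricSpace X] [PseudoMetricSpace E] {F G : ι → Ω → E} {c : E}
    (hG : TendstoInMeasure μ G l (fun _ => c)) {θ : ι → Ω → X} {θ₀ : X}
    (hθ : TendstoInMeasure μ θ l (fun _ => θ₀))
    (hFG : ∀ ε > 0, ∃ δ > 0, ∀ i ω, dist (θ i ω) θ₀ < δ → dist (F i ω) (G i ω) ≤ ε) :
    TendstoInMeasure μ F l (fun _ => c) := by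
  rw [tendstoInMeasure_iff_dist] at hG hθ ⊢
  intro ε hε
  obtain ⟨δ, hδ, hδFG⟩ := hFG (ε / 2) (half_pos hε)
  have hsub : ∀ i, {ω | ε ≤ dist (F i ω) c}
      ⊆ {ω | ε / 2 ≤ dist (G i ω) c} ∪ {ω | δ ≤ dist (θ i ω) θ₀} := by
    intro i ω (hω : ε ≤ dist (F i ω) c)
    by_cases hθi : dist (θ i ω) θ₀ < δ
    · left
      show ε / 2 ≤ dist (G i ω) c
      linarith [dist_triangle (F i ω) (G i ω) c, hδFG i ω hθi]
    · exact Or.inr (not_lt.mp hθi)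
  refine tendsto_of_tendsto_of_tendsto_of_le_of_le tendsto_const_nhds
    (by simpa using (hG _ (half_pos hε)).add (hθ δ hδ)) (fun i => zero_le)
    (fun i => (measure_mono (hsub i)).trans (measure_union_le _ _))

lemma IsCompact.exists_forall_dist_lt_of_continuousOn {X Y E : Type*} [PseudoMetricSpace X]
    [TopologicalSpace Y] [PseudoMetricSpace E] {f : X → Y → E} {s : Set X} {k : Set Y}
    (hk : IsCompact k) (hf : ContinuousOn (Function.uncurry f) (s ×ˢ k)) {x₀ : X} (hx₀ : x₀ ∈ s)
    {ε : ℝ} (hε : 0 < ε) :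
    ∃ δ > 0, ∀ x ∈ s, dist x x₀ < δ → ∀ y ∈ k, dist (f x y) (f x₀ y) < ε := by
  obtain ⟨v, hv, hvf⟩ := hk.mem_uniformity_of_prod hf hx₀ (Metric.dist_mem_uniformity hε)
  obtain ⟨δ, hδ, hδv⟩ := Metric.mem_nhdsWithin_iff.mp hv
  exact ⟨δ, hδ, fun x hx hxδ => hvf x (hδv ⟨hxδ, hx⟩)⟩

theorem stmt7_general {q : ℕ}
    -- survival model
    (Θ : Set (Fin q → ℝ)) (θA : Fin q → ℝ) (hθA : θA ∈ Θ)
    (Λ : (Fin q → ℝ) → ℝ → ℝ)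
    (hΛcont : ContinuousOn (fun p : (Fin q → ℝ) × ℝ => Λ p.1 p.2) (Θ ×ˢ Ici 0))
    (hΛ0 : ∀ θ ∈ Θ, Λ θ 0 = 0)
    (hΛmono : ∀ θ ∈ Θ, MonotoneOn (Λ θ) (Ici 0))
    (tmax : ℝ)
    {Ω : Type*} [MeasurableSpace Ω] (P : Measure Ω) [IsProbabilityMeasure P]
    (T C : ℕ → Ω → ℝ)
    (hT : ∀ i, Measurable (T i)) (hC : ∀ i, Measurable (C i))
    (hTnonneg : ∀ i ω, 0 ≤ T i ω) (hCnonneg : ∀ i ω, 0 ≤ C i ω)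
    (hiid : iIndepFun (fun i ω => (T i ω, C i ω)) P)
    (hident : ∀ i, P.map (fun ω => (T i ω, C i ω)) = P.map (fun ω => (T 0 ω, C 0 ω)))
    (hTC : ∀ i, IndepFun (T i) (C i) P)
    (hsurv : ∀ i, ∀ s ∈ Ici (0 : ℝ),
      P {ω | s < T i ω} = ENNReal.ofReal (Real.exp (-(Λ θA s))))
    -- the fixed time point
    (t : ℝ) (ht : t ∈ Ioc 0 tmax)
    -- estimator assumptions
    (θhat : ℕ → Ω → (Fin q → ℝ))
    (hθhatΘ : ∀ m ω, θhat m ω ∈ Θ)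
    (hθhatprob : TendstoInMeasure P θhat atTop (fun _ => θA))
    -- asymptotic regime
    (nA nB : ℕ → ℕ) (hnA : Tendsto nA atTop atTop) (hnB : Tendsto nB atTop atTop)
    -- the weight
    (w : ℝ) (hw : w ∈ Icc (0 : ℝ) 1)
    -- the limiting variance
    (V₁ : ℝ) (hV₁ : V₁ = ∫ ω, Λ θA (min t (min (T 0 ω) (C 0 ω))) ∂P) :
    TendstoInMeasure P
      (fun k ω => (nB k : ℝ)⁻¹ *
        (w * (∑ i ∈ Finset.range (nB k), if T i ω ≤ min t (C i ω) then (1 : ℝ) else 0)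
          + (1 - w) *
            ∑ i ∈ Finset.range (nB k), Λ (θhat (nA k) ω) (min t (min (T i ω) (C i ω)))))
      atTop (fun _ => V₁) := by
  set G : ℝ → ℝ := fun s => Λ θA (max 0 s)
  have hGc : Continuous G :=
    hΛcont.comp_continuous (continuous_const.prodMk (continuous_const.max continuous_id))
      fun s => ⟨hθA, le_max_left 0 s⟩
  have hGm : Monotone G := fun a b hab =>
    hΛmono θA hθA (le_max_left 0 a) (le_max_left 0 b) (max_le_max_left 0 hab)
  have hG0 : ∀ s ≤ 0, G s = 0 := fun s hs => by simp only [G, max_eq_left hs, hΛ0 θA hθA]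
  have hGΛ : ∀ s, 0 ≤ s → G s = Λ θA s := fun s hs => by simp only [G, max_eq_right hs]
  have hZ i ω : min t (min (T i ω) (C i ω)) ∈ Icc 0 t :=
    ⟨le_min ht.1.le (le_min (hTnonneg i ω) (hCnonneg i ω)), min_le_left _ _⟩
  have hmeanG : ∫ ω, G (min t (min (T 0 ω) (C 0 ω))) ∂P = V₁ :=
    hV₁ ▸ integral_congr_ae (.of_forall fun ω => hGΛ _ (hZ 0 ω).1)
  have hmeanN : ∫ ω, (if T 0 ω ≤ min t (C 0 ω) then (1 : ℝ) else 0) ∂P = V₁ :=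
    (integral_ite_le_min_eq_integral_comp_min (hT 0) (hC 0) (hTC 0) (hTnonneg 0) hGc hGm hG0
      (fun s hs => by rw [hGΛ s hs]; exact hsurv 0 s hs) t).trans hmeanG
  have horacle := tendstoInMeasure_inv_mul_weighted_sum_comp (fun i => (hT i).prodMk (hC i))
    hiid hident (measurable_ite_fst_le_min t) (hGc.comp_min_min t).measurable (K := 1)
    (fun p => by split_ifs <;> simp) (fun _ => hGm.norm_comp_min_le hG0 _ _) hmeanN hmeanG w hnB
  refine TendstoInMeasure.of_forall_dist_le horacle (fun ε hε => (hθhatprob ε hε).comp hnA)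
    fun ε hε => ?_
  obtain ⟨δ, hδ, hδΛ⟩ := isCompact_Icc.exists_forall_dist_lt_of_continuousOn
    (hΛcont.mono (prod_mono subset_rfl Icc_subset_Ici_self)) hθA hε
  refine ⟨δ, hδ, fun k ω hk => dist_inv_mul_weighted_sum_le hw fun i => ?_⟩
  rw [hGΛ _ (hZ i ω).1]
  exact (hδΛ _ (hθhatΘ _ ω) hk _ (hZ i ω)).le

/-- Under the parametric survival model, consistency of the estimator sequence
(independent of the group-B data) and the asymptotic regime, the weighted variance estimator
`(1/n_B(k)) (w · N_B(t) + (1−w) ∑_{i<n_B(k)} Λ(θ̂_A, min(t, X_i)))` converges in probability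
to `V₁(t)` for any `w ∈ [0,1]`. -/
theorem stmt7 {q : ℕ}
    -- survival model
    (Θ : Set (Fin q → ℝ)) (hΘopen : IsOpen Θ) (θA : Fin q → ℝ) (hθA : θA ∈ Θ)
    (Λ : (Fin q → ℝ) → ℝ → ℝ)
    (hΛcont : ContinuousOn (fun p : (Fin q → ℝ) × ℝ => Λ p.1 p.2) (Θ ×ˢ Ici 0))
    (hΛ0 : ∀ θ ∈ Θ, Λ θ 0 = 0)
    (hΛmono : ∀ θ ∈ Θ, MonotoneOn (Λ θ) (Ici 0))
    (hΛnonneg : ∀ θ ∈ Θ, ∀ s ∈ Ici (0 : ℝ), 0 ≤ Λ θ s)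
    (tmax : ℝ) (htmax : 0 < tmax)
    {Ω : Type*} [MeasurableSpace Ω] (P : Measure Ω) [IsProbabilityMeasure P]
    (T C : ℕ → Ω → ℝ)
    (hT : ∀ i, Measurable (T i)) (hC : ∀ i, Measurable (C i))
    (hTnonneg : ∀ i ω, 0 ≤ T i ω) (hCnonneg : ∀ i ω, 0 ≤ C i ω)
    (hiid : iIndepFun (fun i ω => (T i ω, C i ω)) P)
    (hident : ∀ i, P.map (fun ω => (T i ω, C i ω)) = P.map (fun ω => (T 0 ω, C 0 ω)))
    (hTC : ∀ i, IndepFun (T i) (C i) P)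
    (hsurv : ∀ i, ∀ s ∈ Ici (0 : ℝ),
      P {ω | s < T i ω} = ENNReal.ofReal (Real.exp (-(Λ θA s))))
    (hXle : ∀ i, ∀ᵐ ω ∂P, min (T i ω) (C i ω) ≤ tmax)
    -- the fixed time point
    (t : ℝ) (ht : t ∈ Ioc 0 tmax)
    -- estimator assumptions
    (θhat : ℕ → Ω → (Fin q → ℝ))
    (hθhatmeas : ∀ m, Measurable (θhat m))
    (hθhatΘ : ∀ m ω, θhat m ω ∈ Θ)
    (hθhatindep : IndepFun (fun ω => fun m => θhat m ω) (fun ω => fun i => (T i ω, C i ω)) P)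
    (hθhatprob : TendstoInMeasure P θhat atTop (fun _ => θA))
    -- asymptotic regime
    (nA nB : ℕ → ℕ) (hnA : Tendsto nA atTop atTop) (hnB : Tendsto nB atTop atTop)
    (π : ℝ) (hπ : 0 < π)
    (hratio : Tendsto (fun k => (nB k : ℝ) / (nA k : ℝ)) atTop (𝓝 π))
    -- the weight
    (w : ℝ) (hw : w ∈ Icc (0 : ℝ) 1)
    -- the limiting variance
    (V₁ : ℝ) (hV₁ : V₁ = ∫ ω, Λ θA (min t (min (T 0 ω) (C 0 ω))) ∂P) :
    TendstoInMeasure P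
      (fun k ω => (nB k : ℝ)⁻¹ *
        (w * (∑ i ∈ Finset.range (nB k), if T i ω ≤ min t (C i ω) then (1 : ℝ) else 0)
          + (1 - w) *
            ∑ i ∈ Finset.range (nB k), Λ (θhat (nA k) ω) (min t (min (T i ω) (C i ω)))))
      atTop (fun _ => V₁) :=
  stmt7_general Θ θA hθA Λ hΛcont hΛ0 hΛmono tmax P T C hT hC hTnonneg hCnonneg hiid hident hTC
    hsurv t ht θhat hθhatΘ hθhatprob nA nB hnA hnB w hw V₁ hV₁
end

section
/- Let T and C be independent nonnegative real random variables, let Λ : [0,∞) → [0,∞) be continuous and nondecreasing with Λ(0) = 0 and P[T > s] = exp(−Λ(s)) for all s ≥ 0, and set X = min(T, C). Then for every t ≥ 0, E[( 1(T ≤ min(t,C)) − Λ(min(t, X)) )²] = E[Λ(min(t, X))]; in particular, the compensated single-observation counting variable 1(T ≤ min(t,C)) − Λ(min(t,X)) has mean 0 and variance E[Λ(min(t,X))]. -/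
/-!
Conditioning on `C` (independence and Fubini) reduces the claim to a fixed truncation level
`u = min t C ≥ 0`. Continuity and monotonicity of `Λ` make `Λ T` standard exponential on
`[0, Λ u)`: `P[Λ T > x] = P[T > m] = e^{-x}` where `m` is the last point with `Λ m = x`.
The layer-cake formula then gives `E[Λ (min T u)] = ∫₀^{Λ u} e^{-x} dx = 1 - e^{-Λ u} = P[T ≤ u]`
and `E[Λ (min T u)²] = ∫₀^{Λ u} 2x e^{-x} dx`, and the second moment of the compensated variable
follows by expanding the square, using `Λ (min T u) = Λ u` on `{T > u}`.
-/

open MeasureTheory ProbabilityTheory Filter Topology Set Real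

theorem integral_exp_neg_eq (L : ℝ) : ∫ t in (0 : ℝ)..L, exp (-t) = 1 - exp (-L) := by
  have hderiv : ∀ t ∈ uIcc 0 L, HasDerivAt (fun t => -exp (-t)) (exp (-t)) t := fun t _ => by
    simpa using ((hasDerivAt_neg t).exp).fun_neg
  rw [intervalIntegral.integral_eq_sub_of_hasDerivAt hderiv
    ((by fun_prop : Continuous fun t => exp (-t)).intervalIntegrable _ _)]
  simp only [neg_zero, exp_zero]
  ring

theorem integral_two_mul_mul_exp_neg_eq (L : ℝ) :
    ∫ t in (0 : ℝ)..L, 2 * t * exp (-t) = 2 * (1 - exp (-L)) - 2 * L * exp (-L) := by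
  have hderiv : ∀ t ∈ uIcc 0 L,
      HasDerivAt (fun t => -2 * (t + 1) * exp (-t)) (2 * t * exp (-t)) t := fun t _ => by
    have hlin : HasDerivAt (fun t : ℝ => -2 * (t + 1)) (-2) t := by
      simpa using ((hasDerivAt_id t).add_const 1).const_mul (-2)
    exact (hlin.mul (hasDerivAt_neg t).exp).congr_deriv (by ring)
  rw [intervalIntegral.integral_eq_sub_of_hasDerivAt hderiv
    ((by fun_prop : Continuous fun t => 2 * t * exp (-t)).intervalIntegrable _ _)]
  simp only [neg_zero, exp_zero]
  ring

theorem Monotone.exists_eq_and_preimage_Ioi_eq_Ioi {f : ℝ → ℝ} (hf : Monotone f)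
    (hc : Continuous f) {a b x : ℝ} (ha : f a ≤ x) (hb : x < f b) :
    ∃ m, a ≤ m ∧ f m = x ∧ f ⁻¹' Ioi x = Ioi m := by
  set S := f ⁻¹' Iic x
  have hbdd : BddAbove S := ⟨b, fun y hy => by
    by_contra! hby
    exact (hb.trans_le (hf hby.le)).not_ge hy⟩
  have hmS : sSup S ∈ S := (isClosed_Iic.preimage hc).csSup_mem ⟨a, ha⟩ hbdd
  have hpre : f ⁻¹' Ioi x = Ioi (sSup S) := by
    ext y
    simp only [mem_preimage, mem_Ioi]
    constructor
    · intro hy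
      by_contra! hyS
      exact (hf hyS).not_gt (hy.trans_le' hmS)
    · intro hy
      by_contra! hyx
      exact (le_csSup hbdd hyx).not_gt hy
  refine ⟨sSup S, le_csSup hbdd ha, le_antisymm hmS ?_, hpre⟩
  have hlim : Tendsto f (𝓝[>] sSup S) (𝓝 (f (sSup S))) := hc.continuousAt.continuousWithinAt
  refine _root_.ge_of_tendsto hlim (eventually_nhdsWithin_of_forall fun y hy => ?_)
  exact le_of_lt (show y ∈ f ⁻¹' Ioi x from hpre ▸ hy)

theorem integral_primitive_comp_eq_of_measure_lt_eq_exp {α : Type*} [MeasurableSpace α]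
    {μ : Measure α} {f : α → ℝ} {g : ℝ → ℝ} {L : ℝ} (hL : 0 ≤ L) (hf : Measurable f)
    (hf_nonneg : ∀ a, 0 ≤ f a) (hf_le : ∀ a, f a ≤ L)
    (htail : ∀ x ∈ Ioo 0 L, μ {a | x < f a} = ENNReal.ofReal (exp (-x)))
    (hg : Continuous g) (hg_nonneg : ∀ t, 0 ≤ t → 0 ≤ g t) :
    ∫ a, (∫ t in (0 : ℝ)..f a, g t) ∂μ = ∫ t in (0 : ℝ)..L, g t * exp (-t) := by
  have hG_nonneg : ∀ a, 0 ≤ ∫ t in (0 : ℝ)..f a, g t := fun a =>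
    intervalIntegral.integral_nonneg (hf_nonneg a) fun t ht => hg_nonneg t ht.1
  have hG_meas : Measurable fun a => ∫ t in (0 : ℝ)..f a, g t :=
    (intervalIntegral.continuous_primitive (fun _ _ => hg.intervalIntegrable _ _) 0).measurable.comp
      hf
  have htail' : ∀ x ∈ Ioi (0 : ℝ), μ {a | x < f a} * ENNReal.ofReal (g x)
      = (Ioo 0 L).indicator (fun x => ENNReal.ofReal (g x * exp (-x))) x := by
    intro x hx
    by_cases hxL : x < L
    · rw [indicator_of_mem (show x ∈ Ioo 0 L from ⟨hx, hxL⟩), htail x ⟨hx, hxL⟩,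
        ← ENNReal.ofReal_mul (exp_pos _).le, mul_comm]
    · have hempty : {a | x < f a} = ∅ :=
        eq_empty_of_forall_notMem fun a ha => hxL (ha.trans_le (hf_le a))
      rw [indicator_of_notMem fun h => hxL h.2, hempty, measure_empty, zero_mul]
  have hlayer : ∫⁻ a, ENNReal.ofReal (∫ t in (0 : ℝ)..f a, g t) ∂μ
      = ∫⁻ t in Ioo 0 L, ENNReal.ofReal (g t * exp (-t)) := by
    rw [lintegral_comp_eq_lintegral_meas_lt_mul μ (ae_of_all _ hf_nonneg) hf.aemeasurable
        (fun _ _ => hg.intervalIntegrable _ _)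
        (ae_restrict_of_forall_mem measurableSet_Ioi fun t ht => hg_nonneg t (le_of_lt ht)),
      setLIntegral_congr_fun measurableSet_Ioi htail', lintegral_indicator measurableSet_Ioo,
      Measure.restrict_restrict measurableSet_Ioo, inter_eq_self_of_subset_left Ioo_subset_Ioi_self]
  rw [integral_eq_lintegral_of_nonneg_ae (ae_of_all _ hG_nonneg) hG_meas.aestronglyMeasurable,
    hlayer, intervalIntegral.integral_of_le hL, integral_Ioc_eq_integral_Ioo,
    integral_eq_lintegral_of_nonneg_ae
      (ae_restrict_of_forall_mem measurableSet_Ioo fun t ht =>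
        mul_nonneg (hg_nonneg t ht.1.le) (exp_pos _).le)
      (by fun_prop)]

section Hazard

variable {μ : Measure ℝ} {Λ : ℝ → ℝ}

theorem hazard_nonneg (hm : Monotone Λ) (hΛ0 : ∀ s ≤ 0, Λ s = 0) (s : ℝ) : 0 ≤ Λ s :=
  (le_total s 0).elim (fun hs => (hΛ0 s hs).ge) fun hs => (hΛ0 0 le_rfl).symm.le.trans (hm hs)

theorem measure_preimage_hazard_Ioi_eq_exp (hc : Continuous Λ) (hm : Monotone Λ) (hΛ0 : Λ 0 = 0)
    (hsurv : ∀ s, 0 ≤ s → μ (Ioi s) = ENNReal.ofReal (exp (-Λ s)))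
    {x b : ℝ} (hx : 0 ≤ x) (hxb : x < Λ b) :
    μ (Λ ⁻¹' Ioi x) = ENNReal.ofReal (exp (-x)) := by
  obtain ⟨m, hm0, hmx, hpre⟩ := hm.exists_eq_and_preimage_Ioi_eq_Ioi hc (hΛ0.trans_le hx) hxb
  rw [hpre, hsurv m hm0, hmx]

theorem integral_primitive_hazard_min_eq (hc : Continuous Λ) (hm : Monotone Λ)
    (hΛ0 : ∀ s ≤ 0, Λ s = 0) (hsurv : ∀ s, 0 ≤ s → μ (Ioi s) = ENNReal.ofReal (exp (-Λ s)))
    (u : ℝ) {g : ℝ → ℝ} (hg : Continuous g) (hg_nonneg : ∀ t, 0 ≤ t → 0 ≤ g t) :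
    ∫ a, (∫ t in (0 : ℝ)..Λ (min a u), g t) ∂μ = ∫ t in (0 : ℝ)..Λ u, g t * exp (-t) := by
  refine integral_primitive_comp_eq_of_measure_lt_eq_exp (hazard_nonneg hm hΛ0 u)
    (hc.measurable.comp (measurable_id.min measurable_const)) (fun a => hazard_nonneg hm hΛ0 _)
    (fun a => hm (min_le_right a u)) (fun x hx => ?_) hg hg_nonneg
  have hset : {a | x < Λ (min a u)} = Λ ⁻¹' Ioi x := by
    ext a
    simp [hm.map_min, hx.2]
  rw [hset, measure_preimage_hazard_Ioi_eq_exp hc hm (hΛ0 0 le_rfl) hsurv hx.1.le hx.2]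

theorem integral_hazard_min_eq (hc : Continuous Λ) (hm : Monotone Λ)
    (hΛ0 : ∀ s ≤ 0, Λ s = 0) (hsurv : ∀ s, 0 ≤ s → μ (Ioi s) = ENNReal.ofReal (exp (-Λ s)))
    (u : ℝ) :
    ∫ a, Λ (min a u) ∂μ = 1 - exp (-Λ u) := by
  simpa [integral_exp_neg_eq] using
    integral_primitive_hazard_min_eq hc hm hΛ0 hsurv u continuous_const fun _ _ => zero_le_one

theorem integral_hazard_min_sq_eq (hc : Continuous Λ) (hm : Monotone Λ)
    (hΛ0 : ∀ s ≤ 0, Λ s = 0) (hsurv : ∀ s, 0 ≤ s → μ (Ioi s) = ENNReal.ofReal (exp (-Λ s)))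
    (u : ℝ) :
    ∫ a, Λ (min a u) ^ 2 ∂μ = 2 * (1 - exp (-Λ u)) - 2 * Λ u * exp (-Λ u) := by
  have h := integral_primitive_hazard_min_eq hc hm hΛ0 hsurv u (continuous_const_mul 2)
    fun t ht => by positivity
  have hprim : ∀ x : ℝ, ∫ t in (0 : ℝ)..x, 2 * t = x ^ 2 := fun x => by
    rw [intervalIntegral.integral_const_mul, integral_id]
    ring
  simpa only [hprim, integral_two_mul_mul_exp_neg_eq] using h

theorem integrable_hazard_min_pow [IsFiniteMeasure μ] (hc : Continuous Λ) (hm : Monotone Λ)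
    (hΛ0 : ∀ s ≤ 0, Λ s = 0) (u : ℝ) (n : ℕ) : Integrable (fun a => Λ (min a u) ^ n) μ := by
  refine Integrable.of_bound (by fun_prop) (Λ u ^ n) (ae_of_all _ fun a => ?_)
  rw [norm_pow, Real.norm_of_nonneg (hazard_nonneg hm hΛ0 _)]
  exact pow_le_pow_left₀ (hazard_nonneg hm hΛ0 _) (hm (min_le_right a u)) n

theorem integral_ite_le_eq [IsProbabilityMeasure μ]
    (hsurv : ∀ s, 0 ≤ s → μ (Ioi s) = ENNReal.ofReal (exp (-Λ s))) {u : ℝ} (hu : 0 ≤ u) :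
    ∫ a, (if a ≤ u then (1 : ℝ) else 0) ∂μ = 1 - exp (-Λ u) := by
  have hχ : (fun a => if a ≤ u then (1 : ℝ) else 0) = (Iic u).indicator 1 := by
    ext a
    simp [indicator_apply]
  rw [hχ, ← compl_Ioi, integral_indicator_one measurableSet_Ioi.compl,
    probReal_compl_eq_one_sub measurableSet_Ioi, measureReal_def, hsurv u hu,
    ENNReal.toReal_ofReal (exp_pos _).le]

noncomputable def compensatedCount (Λ : ℝ → ℝ) (u a : ℝ) : ℝ :=
  (if a ≤ u then 1 else 0) - Λ (min a u)

theorem integral_compensatedCount_eq_zero [IsProbabilityMeasure μ] (hc : Continuous Λ)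
    (hm : Monotone Λ) (hΛ0 : ∀ s ≤ 0, Λ s = 0)
    (hsurv : ∀ s, 0 ≤ s → μ (Ioi s) = ENNReal.ofReal (exp (-Λ s))) {u : ℝ} (hu : 0 ≤ u) :
    ∫ a, compensatedCount Λ u a ∂μ = 0 := by
  have hχ : Integrable (fun a => if a ≤ u then (1 : ℝ) else 0) μ :=
    (integrable_const 1).indicator measurableSet_Iic
  unfold compensatedCount
  rw [integral_sub hχ (by simpa using integrable_hazard_min_pow hc hm hΛ0 u 1 (μ := μ)),
    integral_ite_le_eq hsurv hu, integral_hazard_min_eq hc hm hΛ0 hsurv u, sub_self]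

theorem integral_compensatedCount_sq_eq [IsProbabilityMeasure μ] (hc : Continuous Λ)
    (hm : Monotone Λ) (hΛ0 : ∀ s ≤ 0, Λ s = 0)
    (hsurv : ∀ s, 0 ≤ s → μ (Ioi s) = ENNReal.ofReal (exp (-Λ s))) {u : ℝ} (hu : 0 ≤ u) :
    ∫ a, compensatedCount Λ u a ^ 2 ∂μ = ∫ a, Λ (min a u) ∂μ := by
  have hχ : Integrable (fun a => if a ≤ u then (1 : ℝ) else 0) μ :=
    (integrable_const 1).indicator measurableSet_Iic
  have hM := integrable_hazard_min_pow hc hm hΛ0 u 1 (μ := μ)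
  have hM2 := integrable_hazard_min_pow hc hm hΛ0 u 2 (μ := μ)
  simp only [pow_one] at hM
  have hpt : ∀ a, compensatedCount Λ u a ^ 2
      = (if a ≤ u then 1 else 0) - 2 * Λ (min a u) + Λ (min a u) ^ 2
        + 2 * Λ u * (1 - if a ≤ u then 1 else 0) := fun a => by
    by_cases ha : a ≤ u
    · simp only [compensatedCount, if_pos ha]; ring
    · simp only [compensatedCount, if_neg ha, min_eq_right (le_of_not_ge ha)]; ring
  simp_rw [hpt]
  rw [integral_add ((hχ.sub' (hM.const_mul 2)).fun_add hM2)
      (((integrable_const 1).sub' hχ).const_mul _),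
    integral_add (hχ.sub' (hM.const_mul 2)) hM2, integral_sub hχ (hM.const_mul 2),
    integral_const_mul, integral_const_mul,
    integral_sub (integrable_const 1) hχ, integral_ite_le_eq hsurv hu,
    integral_hazard_min_eq hc hm hΛ0 hsurv u, integral_hazard_min_sq_eq hc hm hΛ0 hsurv u]
  simp only [integral_const, probReal_univ, smul_eq_mul, mul_one]
  ring

end Hazard

theorem ProbabilityTheory.IndepFun.integral_comp_eq_integral_integral {Ω β γ E : Type*}
    [MeasurableSpace Ω] [MeasurableSpace β] [MeasurableSpace γ] [NormedAddCommGroup E]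
    [NormedSpace ℝ E] {P : Measure Ω} [IsFiniteMeasure P] {X : Ω → β} {Y : Ω → γ}
    (hXY : IndepFun X Y P)
    (hX : Measurable X) (hY : Measurable Y) {F : β × γ → E}
    (hF : Integrable F ((P.map X).prod (P.map Y))) :
    ∫ ω, F (X ω, Y ω) ∂P = ∫ y, ∫ x, F (x, y) ∂(P.map X) ∂(P.map Y) := by
  have hmap := (indepFun_iff_map_prod_eq_prod_map_map hX.aemeasurable hY.aemeasurable).1 hXY
  rw [← integral_prod_symm F hF, ← hmap,
    integral_map (hX.prodMk hY).aemeasurable (hmap ▸ hF.aestronglyMeasurable)]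

section Independent

variable {Λ : ℝ → ℝ}

theorem abs_compensatedCount_le (hm : Monotone Λ) (hΛ0 : ∀ s ≤ 0, Λ s = 0) (u a : ℝ) :
    |compensatedCount Λ u a| ≤ 1 + Λ u := by
  have h0 := hazard_nonneg hm hΛ0 (min a u)
  have hu := hm (min_le_right a u)
  unfold compensatedCount
  split_ifs <;> exact abs_sub_le_iff.2 ⟨by linarith, by linarith⟩

theorem integrable_compensatedCount_min_pow {ν : Measure (ℝ × ℝ)} [IsFiniteMeasure ν]
    (hc : Continuous Λ) (hm : Monotone Λ) (hΛ0 : ∀ s ≤ 0, Λ s = 0) (t : ℝ) (n : ℕ) :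
    Integrable (fun p : ℝ × ℝ => compensatedCount Λ (min t p.2) p.1 ^ n) ν := by
  have hmeas : Measurable fun p : ℝ × ℝ => compensatedCount Λ (min t p.2) p.1 :=
    (Measurable.ite (measurableSet_le measurable_fst (measurable_const.min measurable_snd))
      measurable_const measurable_const).sub
      (hc.measurable.comp (measurable_fst.min (measurable_const.min measurable_snd)))
  refine Integrable.of_bound (hmeas.pow_const n).aestronglyMeasurable ((1 + Λ t) ^ n)
    (ae_of_all _ fun p => ?_)
  rw [norm_pow, Real.norm_eq_abs]
  refine pow_le_pow_left₀ (abs_nonneg _) ((abs_compensatedCount_le hm hΛ0 _ _).trans ?_) n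
  exact add_le_add_right (hm (min_le_left _ _)) 1

theorem integrable_hazard_min_min {ν : Measure (ℝ × ℝ)} [IsFiniteMeasure ν]
    (hc : Continuous Λ) (hm : Monotone Λ) (hΛ0 : ∀ s ≤ 0, Λ s = 0) (t : ℝ) :
    Integrable (fun p : ℝ × ℝ => Λ (min p.1 (min t p.2))) ν := by
  refine Integrable.of_bound (by fun_prop) (Λ t) (ae_of_all _ fun p => ?_)
  rw [Real.norm_of_nonneg (hazard_nonneg hm hΛ0 _)]
  exact hm ((min_le_right _ _).trans (min_le_left _ _))

variable {Ω : Type*} [MeasurableSpace Ω] {P : Measure Ω} [IsProbabilityMeasure P] {T C : Ω → ℝ}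

theorem ProbabilityTheory.IndepFun.integral_compensatedCount
    (hTC : IndepFun T C P) (hT : Measurable T) (hC : Measurable C) (hC_nonneg : ∀ ω, 0 ≤ C ω)
    (hc : Continuous Λ) (hm : Monotone Λ) (hΛ0 : ∀ s ≤ 0, Λ s = 0)
    (hsurv : ∀ s, 0 ≤ s → P.map T (Ioi s) = ENNReal.ofReal (exp (-Λ s))) {t : ℝ} (ht : 0 ≤ t) :
    (∫ ω, compensatedCount Λ (min t (C ω)) (T ω) ^ 2 ∂P = ∫ ω, Λ (min (T ω) (min t (C ω))) ∂P)
      ∧ ∫ ω, compensatedCount Λ (min t (C ω)) (T ω) ∂P = 0 := by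
  have := Measure.isProbabilityMeasure_map (μ := P) hT.aemeasurable
  have hC_ae : ∀ᵐ c ∂P.map C, 0 ≤ c :=
    (ae_map_iff hC.aemeasurable measurableSet_Ici).2 (ae_of_all _ hC_nonneg)
  refine ⟨?_, ?_⟩
  · calc ∫ ω, compensatedCount Λ (min t (C ω)) (T ω) ^ 2 ∂P
        = ∫ c, ∫ a, compensatedCount Λ (min t c) a ^ 2 ∂(P.map T) ∂(P.map C) :=
          hTC.integral_comp_eq_integral_integral hT hC
            (integrable_compensatedCount_min_pow hc hm hΛ0 t 2)
      _ = ∫ c, ∫ a, Λ (min a (min t c)) ∂(P.map T) ∂(P.map C) :=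
          integral_congr_ae (hC_ae.mono fun c hc' =>
            integral_compensatedCount_sq_eq hc hm hΛ0 hsurv (le_min ht hc'))
      _ = ∫ ω, Λ (min (T ω) (min t (C ω))) ∂P :=
          (hTC.integral_comp_eq_integral_integral hT hC
            (integrable_hazard_min_min hc hm hΛ0 t)).symm
  · have hN : Integrable (fun p : ℝ × ℝ => compensatedCount Λ (min t p.2) p.1)
        ((P.map T).prod (P.map C)) := by
      simpa using integrable_compensatedCount_min_pow hc hm hΛ0 t 1
    refine (hTC.integral_comp_eq_integral_integral hT hC hN).trans ?_
    exact integral_eq_zero_of_ae (hC_ae.mono fun c hc' =>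
      integral_compensatedCount_eq_zero hc hm hΛ0 hsurv (le_min ht hc'))

end Independent

theorem stmt11_general {Ω : Type*} [MeasurableSpace Ω] (P : Measure Ω) [IsProbabilityMeasure P]
    (T C : Ω → ℝ) (hT : Measurable T) (hC : Measurable C)
    (hTnonneg : ∀ ω, 0 ≤ T ω) (hCnonneg : ∀ ω, 0 ≤ C ω)
    (hTC : IndepFun T C P)
    (Λ : ℝ → ℝ) (hΛcont : ContinuousOn Λ (Ici 0)) (hΛmono : MonotoneOn Λ (Ici 0))
    (hΛ0 : Λ 0 = 0)
    (hsurv : ∀ s ∈ Ici (0 : ℝ), P {ω | s < T ω} = ENNReal.ofReal (Real.exp (-Λ s))) :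
    ∀ t ≥ (0 : ℝ),
      (∫ ω, ((if T ω ≤ min t (C ω) then (1 : ℝ) else 0)
          - Λ (min t (min (T ω) (C ω)))) ^ 2 ∂P
        = ∫ ω, Λ (min t (min (T ω) (C ω))) ∂P)
      ∧ ∫ ω, ((if T ω ≤ min t (C ω) then (1 : ℝ) else 0)
          - Λ (min t (min (T ω) (C ω)))) ∂P = 0 := by
  intro t ht
  set Λ' : ℝ → ℝ := fun s => Λ (max s 0)
  have hΛ'c : Continuous Λ' :=
    hΛcont.comp_continuous (continuous_id.max continuous_const) fun s => le_max_right s 0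
  have hΛ'm : Monotone Λ' := fun a b hab =>
    hΛmono (le_max_right a 0) (le_max_right b 0) (max_le_max_right 0 hab)
  have hΛ'0 : ∀ s ≤ 0, Λ' s = 0 := fun s hs => by simp only [Λ', max_eq_right hs, hΛ0]
  have hsurv' : ∀ s, 0 ≤ s → P.map T (Ioi s) = ENNReal.ofReal (Real.exp (-Λ' s)) := fun s hs => by
    rw [Measure.map_apply hT measurableSet_Ioi]
    exact (hsurv s hs).trans (by simp only [Λ', max_eq_left hs])
  have hΛ' : ∀ ω, Λ (min t (min (T ω) (C ω))) = Λ' (min (T ω) (min t (C ω))) := fun ω => by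
    simp only [Λ', min_left_comm t, max_eq_left (le_min (hTnonneg ω) (le_min ht (hCnonneg ω)))]
  simp only [hΛ']
  exact hTC.integral_compensatedCount hT hC hCnonneg hΛ'c hΛ'm hΛ'0 hsurv' ht

/-- With `T`, `C`, `Λ`, `X = min T C` as in the survival setting, for every
`t ≥ 0` the compensated single-observation counting variable
`1(T ≤ min(t,C)) − Λ(min(t,X))` satisfies
`E[(1(T ≤ min(t,C)) − Λ(min(t,X)))²] = E[Λ(min(t,X))]`; in particular it has mean `0`
and variance `E[Λ(min(t,X))]`. -/
theorem stmt11 {Ω : Type*} [MeasurableSpace Ω] (P : Measure Ω) [IsProbabilityMeasure P]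
    (T C : Ω → ℝ) (hT : Measurable T) (hC : Measurable C)
    (hTnonneg : ∀ ω, 0 ≤ T ω) (hCnonneg : ∀ ω, 0 ≤ C ω)
    (hTC : IndepFun T C P)
    (Λ : ℝ → ℝ) (hΛcont : ContinuousOn Λ (Ici 0)) (hΛmono : MonotoneOn Λ (Ici 0))
    (hΛ0 : Λ 0 = 0) (hΛnonneg : ∀ s ∈ Ici (0 : ℝ), 0 ≤ Λ s)
    (hsurv : ∀ s ∈ Ici (0 : ℝ), P {ω | s < T ω} = ENNReal.ofReal (Real.exp (-Λ s))) :
    ∀ t ≥ (0 : ℝ),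
      (∫ ω, ((if T ω ≤ min t (C ω) then (1 : ℝ) else 0)
          - Λ (min t (min (T ω) (C ω)))) ^ 2 ∂P
        = ∫ ω, Λ (min t (min (T ω) (C ω))) ∂P)
      ∧ ∫ ω, ((if T ω ≤ min t (C ω) then (1 : ℝ) else 0)
          - Λ (min t (min (T ω) (C ω)))) ∂P = 0 :=
  stmt11_general P T C hT hC hTnonneg hCnonneg hTC Λ hΛcont hΛmono hΛ0 hsurv
end
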